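/- Exponential tightness: let ε ∈ (0,1], let (A_N) and (B_N) be sequences of N×N Hermitian matrices whose eigenvalues all lie in [ε,1], let F be a bounded continuous function on the space of probability measures on [0,∞) (with the weak topology), let c : [0,∞) → ℝ be continuous with liminf_{x→∞} c(x)/x > 0, and let a, b ≥ 0. For a Borel set X of probability measures on [0,∞) define Π̃^N(X) = Σ_λ 1_{μ̂^N_λ ∈ X} · (∏_{1≤i<j≤N}((l_i−l_j)/N))^{a+b} · I_N(log A_N, diag(l_1/N,…,l_N/N))^a · I_N(log B_N, diag(l_1/N,…,l_N/N))^b · exp(N²·F(μ̂^N_λ) − N²·∫ c(x) dμ̂^N_λ(x)), the sum over all Young diagrams λ with at most N rows, with l_i = λ_i + N − i. Let K_L = {ν probability measure on [0,∞) : ∫ x dν(x) ≤ L}. Then Π̃^N(X) is finite for each N, and lim_{L→∞} limsup_{N→∞} (1/N²)·log Π̃^N(K_L^c) = −∞. -/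

import Mathlib

open MeasureTheory

/-- Matrices are endowed with the Borel sigma-algebra of their (entrywise) topology. -/
noncomputable instance matrixMeasurableSpace {m n α : Type*} [TopologicalSpace α] :
    MeasurableSpace (Matrix m n α) := borel _

/-- The spherical integral `I_N(C, D) = ∫_{U(N)} exp (N • tr (U C U⋆ D)) dμ(U)`,
with respect to a measure `μ` on the unitary group (real part is taken; for the
matrices considered here the trace is real). -/
noncomputable def sphInt (N : ℕ) (μ : Measure (Matrix.unitaryGroup (Fin N) ℂ))
    (C D : Matrix (Fin N) (Fin N) ℂ) : ℝ :=
  ∫ U, Real.exp ((N : ℝ) * (Matrix.trace ((U : Matrix (Fin N) (Fin N) ℂ) * C *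
    star (U : Matrix (Fin N) (Fin N) ℂ) * D)).re) ∂μ

/-- The coordinates `l_i = λ_i + N - i` of a Young diagram with at most `N` rows, as real
numbers (0-indexed: `l i = λ_i + N - 1 - i`). -/
noncomputable def lCoord (N : ℕ) (lam : Fin N → ℕ) (i : Fin N) : ℝ :=
  ((lam i + (N - 1 - (i : ℕ)) : ℕ) : ℝ)

/-- The empirical measure `μ̂^N_λ = (1/N) ∑_{i=1}^N δ_{(λ_i + N - i)/N}` of a Young diagram
`λ` with at most `N` rows. -/
noncomputable def empYoung (N : ℕ) (lam : Fin N → ℕ) : Measure ℝ :=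
  (N : ENNReal)⁻¹ • ∑ i : Fin N, Measure.dirac (lCoord N lam i / N)

/-- The matrix logarithm of a Hermitian matrix with positive eigenvalues, via the spectral
decomposition. -/
noncomputable def hermLog {N : ℕ} {A : Matrix (Fin N) (Fin N) ℂ} (hA : A.IsHermitian) :
    Matrix (Fin N) (Fin N) ℂ :=
  (hA.eigenvectorUnitary : Matrix (Fin N) (Fin N) ℂ) *
    Matrix.diagonal (fun i => ((Real.log (hA.eigenvalues i) : ℝ) : ℂ)) *
    star (hA.eigenvectorUnitary : Matrix (Fin N) (Fin N) ℂ)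

/-- One term (indexed by a Young diagram `λ` with at most `N` rows) of the sum defining
`Π̃^N(X)`:
`1_{μ̂^N_λ ∈ X} · (∏_{i<j} (l_i - l_j)/N)^{a+b} · I_N(log A_N, l/N)^a · I_N(log B_N, l/N)^b
  · exp (N² F(μ̂^N_λ) - N² ∫ c dμ̂^N_λ)`. -/
noncomputable def piTerm (N : ℕ) (m : Measure (Matrix.unitaryGroup (Fin N) ℂ))
    (logA logB : Matrix (Fin N) (Fin N) ℂ) (F : Measure ℝ → ℝ) (c : ℝ → ℝ) (a b : ℝ)
    (X : Set (Measure ℝ)) (lam : {l : Fin N → ℕ // Antitone l}) : ℝ :=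
  X.indicator (fun _ => (1 : ℝ)) (empYoung N lam.1) *
    (∏ i : Fin N, ∏ j ∈ Finset.Ioi i, ((lCoord N lam.1 i - lCoord N lam.1 j) / N)) ^ (a + b) *
    sphInt N m logA (Matrix.diagonal fun i => ((lCoord N lam.1 i / N : ℝ) : ℂ)) ^ a *
    sphInt N m logB (Matrix.diagonal fun i => ((lCoord N lam.1 i / N : ℝ) : ℂ)) ^ b *
    Real.exp ((N : ℝ) ^ 2 * F (empYoung N lam.1) -
      (N : ℝ) ^ 2 * ∫ x, c x ∂(empYoung N lam.1))

/-- The measure `Π̃^N(X)`, a sum over all Young diagrams with at most `N` rows. -/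
noncomputable def piTilde (N : ℕ) (m : Measure (Matrix.unitaryGroup (Fin N) ℂ))
    (logA logB : Matrix (Fin N) (Fin N) ℂ) (F : Measure ℝ → ℝ) (c : ℝ → ℝ) (a b : ℝ)
    (X : Set (Measure ℝ)) : ℝ :=
  ∑' lam : {l : Fin N → ℕ // Antitone l}, piTerm N m logA logB F c a b X lam

/- ===== Auxiliary lemmas ===== -/

instance matrixBorelSpace {m n α : Type*} [TopologicalSpace α] :
    BorelSpace (Matrix m n α) := ⟨rfl⟩

instance unitaryOpensMeasurable {N : ℕ} :
    OpensMeasurableSpace (Matrix.unitaryGroup (Fin N) ℂ) :=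
  Subtype.opensMeasurableSpace _

lemma summable_pi_geom (n : ℕ) {r : ℝ} (h0 : 0 ≤ r) (h1 : r < 1) :
    Summable (fun f : Fin n → ℕ => ∏ i, r ^ (f i)) ∧
    (∑' f : Fin n → ℕ, ∏ i, r ^ (f i)) ≤ (1 - r)⁻¹ ^ n := by
  induction n with
  | zero =>
    have hr : (0:ℝ) < 1 - r := by linarith
    constructor
    · exact summable_of_finite_support (Set.toFinite _)
    · rw [tsum_eq_single (default : Fin 0 → ℕ)
        (by intro f hf; exact absurd (Subsingleton.elim f default) hf)]
      simp
  | succ n ih =>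
    let e : ℕ × (Fin n → ℕ) ≃ (Fin (n+1) → ℕ) := Fin.consEquiv fun _ => ℕ
    have hgeo : Summable (fun k : ℕ => r ^ k) := summable_geometric_of_lt_one h0 h1
    have hprodnn : ∀ f : Fin n → ℕ, (0:ℝ) ≤ ∏ i, r ^ (f i) :=
      fun f => Finset.prod_nonneg fun i _ => pow_nonneg h0 _
    have hs : Summable (fun p : ℕ × (Fin n → ℕ) => r ^ p.1 * ∏ i, r ^ (p.2 i)) := by
      apply Summable.mul_of_nonneg hgeo ih.1
      · intro k; exact pow_nonneg h0 k
      · intro f; exact hprodnn f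
    have key : ∀ p : ℕ × (Fin n → ℕ),
        (∏ i, r ^ ((e p) i)) = r ^ p.1 * ∏ i, r ^ (p.2 i) := by
      intro p
      simp [e, Fin.consEquiv, Fin.prod_univ_succ, Fin.cons_zero, Fin.cons_succ]
    have hsum : Summable (fun f : Fin (n+1) → ℕ => ∏ i, r ^ (f i)) :=
      e.summable_iff.mp (hs.congr fun p => (key p).symm)
    refine ⟨hsum, ?_⟩
    calc (∑' f : Fin (n+1) → ℕ, ∏ i, r ^ (f i))
        = ∑' p : ℕ × (Fin n → ℕ), r ^ p.1 * ∏ i, r ^ (p.2 i) := by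
          rw [← e.tsum_eq (fun f => ∏ i, r ^ (f i))]
          exact tsum_congr key
      _ = (∑' k : ℕ, r ^ k) * (∑' f : Fin n → ℕ, ∏ i, r ^ (f i)) :=
          (tsum_mul_tsum_of_summable_norm
            (hgeo.congr fun k => (Real.norm_of_nonneg (pow_nonneg h0 k)).symm)
            (ih.1.congr fun f => (Real.norm_of_nonneg (hprodnn f)).symm)).symm
      _ ≤ (1 - r)⁻¹ * (1 - r)⁻¹ ^ n := by
          apply mul_le_mul
          · rw [tsum_geometric_of_lt_one h0 h1]
          · exact ih.2
          · exact tsum_nonneg hprodnn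
          · have hr : (0:ℝ) < 1 - r := by linarith
            positivity
      _ = (1 - r)⁻¹ ^ (n+1) := by ring

lemma lCoord_nonneg (N : ℕ) (lam : Fin N → ℕ) (i : Fin N) : 0 ≤ lCoord N lam i := by
  unfold lCoord; positivity

lemma lam_le_lCoord (N : ℕ) (lam : Fin N → ℕ) (i : Fin N) : (lam i : ℝ) ≤ lCoord N lam i := by
  unfold lCoord; push_cast; linarith [Nat.cast_nonneg (α := ℝ) (N - 1 - (i:ℕ))]

lemma lCoord_sub_ge (N : ℕ) {lam : Fin N → ℕ} (hlam : Antitone lam) {i j : Fin N} (hij : i < j) :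
    1 ≤ lCoord N lam i - lCoord N lam j := by
  unfold lCoord
  have h1 : lam j ≤ lam i := hlam hij.le
  have h2 : (j:ℕ) < N := j.isLt
  have h3 : (i:ℕ) < (j:ℕ) := hij
  have h4 : lam j + (N - 1 - (j:ℕ)) + 1 ≤ lam i + (N - 1 - (i:ℕ)) := by omega
  have := (Nat.cast_le (α := ℝ)).mpr h4
  push_cast at this ⊢
  linarith

lemma integrable_dirac_fun {g : ℝ → ℝ} {x : ℝ} : Integrable g (Measure.dirac x) :=
  (integrable_const (g x)).congr (ae_eq_dirac g).symm

lemma empYoung_integral (N : ℕ) (lam : Fin N → ℕ) (g : ℝ → ℝ) :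
    ∫ x, g x ∂(empYoung N lam) = (N:ℝ)⁻¹ * ∑ i : Fin N, g (lCoord N lam i / N) := by
  unfold empYoung
  rw [integral_smul_measure, integral_finset_sum_measure (fun i _ => integrable_dirac_fun)]
  simp [integral_dirac]

lemma empYoung_prob (N : ℕ) (hN : 0 < N) (lam : Fin N → ℕ) :
    IsProbabilityMeasure (empYoung N lam) := by
  constructor
  unfold empYoung
  simp [Measure.smul_apply, Measure.finset_sum_apply, Measure.dirac_apply_of_mem (Set.mem_univ _)]
  rw [ENNReal.inv_mul_cancel] <;> simp [hN.ne']

lemma empYoung_Iio (N : ℕ) (lam : Fin N → ℕ) : (empYoung N lam) (Set.Iio 0) = 0 := by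
  unfold empYoung
  rw [Measure.smul_apply, Measure.finset_sum_apply]
  have : ∀ i : Fin N, Measure.dirac (lCoord N lam i / N) (Set.Iio 0) = 0 := by
    intro i
    rw [Measure.dirac_apply' _ measurableSet_Iio]
    have : lCoord N lam i / N ∉ Set.Iio (0:ℝ) := by
      simp only [Set.mem_Iio, not_lt]
      exact div_nonneg (lCoord_nonneg N lam i) (Nat.cast_nonneg N)
    simp [Set.indicator_of_notMem this]
  simp [this]

lemma trace_re_nonpos {N : ℕ} (V : Matrix (Fin N) (Fin N) ℂ) (L d : Fin N → ℝ)
    (hL : ∀ j, L j ≤ 0) (hd : ∀ k, 0 ≤ d k) :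
    (Matrix.trace (V * Matrix.diagonal (fun j => (L j : ℂ)) * star V *
      Matrix.diagonal (fun k => (d k : ℂ)))).re ≤ 0 := by
  have htr : (Matrix.trace (V * Matrix.diagonal (fun j => (L j : ℂ)) * star V *
      Matrix.diagonal (fun k => (d k : ℂ)))).re
      = ∑ k, ∑ j, (L j * d k) * Complex.normSq (V k j) := by
    have expand : ∀ k, (V * Matrix.diagonal (fun j => (L j : ℂ)) * star V *
        Matrix.diagonal (fun k => (d k : ℂ))) k k
        = ∑ j, (V k j * (L j : ℂ) * (starRingEnd ℂ) (V k j)) * (d k : ℂ) := by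
      intro k
      rw [Matrix.mul_diagonal, Matrix.mul_apply, Finset.sum_mul]
      simp only [Matrix.mul_diagonal, Matrix.star_eq_conjTranspose, Matrix.conjTranspose_apply]
      rfl
    have term : ∀ (z : ℂ) (x y : ℝ), ((z * (x:ℂ) * (starRingEnd ℂ) z) * (y:ℂ)).re
        = (x * y) * Complex.normSq z := by
      intro z x y
      rw [show z * (x:ℂ) * (starRingEnd ℂ) z * (y:ℂ)
          = (z * (starRingEnd ℂ) z) * ((x:ℂ) * (y:ℂ)) by ring, Complex.mul_conj,
        ← Complex.ofReal_mul, ← Complex.ofReal_mul]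
      rw [Complex.ofReal_re]
      ring
    rw [Matrix.trace]
    unfold Matrix.diag
    simp only [expand, Complex.re_sum, term]
  rw [htr]
  apply Finset.sum_nonpos
  intro k _
  apply Finset.sum_nonpos
  intro j _
  have := Complex.normSq_nonneg (V k j)
  have := mul_nonpos_of_nonpos_of_nonneg (hL j) (hd k)
  nlinarith

lemma sphInt_bounds {N : ℕ} (m : Measure (Matrix.unitaryGroup (Fin N) ℂ))
    [IsProbabilityMeasure m] {A : Matrix (Fin N) (Fin N) ℂ} (hA : A.IsHermitian)
    (hAeig : ∀ i, hA.eigenvalues i ≤ 1) (hAeig0 : ∀ i, 0 ≤ hA.eigenvalues i) (d : Fin N → ℝ)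
    (hd : ∀ k, 0 ≤ d k) :
    0 < sphInt N m (hermLog hA) (Matrix.diagonal fun k => ((d k : ℝ) : ℂ)) ∧
    sphInt N m (hermLog hA) (Matrix.diagonal fun k => ((d k : ℝ) : ℂ)) ≤ 1 := by
  set D := Matrix.diagonal fun k => ((d k : ℝ) : ℂ) with hD
  set W : Matrix (Fin N) (Fin N) ℂ := (hA.eigenvectorUnitary : Matrix (Fin N) (Fin N) ℂ) with hW
  set f : Matrix.unitaryGroup (Fin N) ℂ → ℝ := fun U =>
    Real.exp ((N : ℝ) * (Matrix.trace ((U : Matrix (Fin N) (Fin N) ℂ) * hermLog hA *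
      star (U : Matrix (Fin N) (Fin N) ℂ) * D)).re) with hf
  have hrw : ∀ U : Matrix.unitaryGroup (Fin N) ℂ,
      (U : Matrix (Fin N) (Fin N) ℂ) * hermLog hA * star (U : Matrix (Fin N) (Fin N) ℂ) * D
      = ((U : Matrix (Fin N) (Fin N) ℂ) * W) *
          Matrix.diagonal (fun i => ((Real.log (hA.eigenvalues i) : ℝ) : ℂ)) *
          star ((U : Matrix (Fin N) (Fin N) ℂ) * W) * D := by
    intro U
    unfold hermLog
    rw [star_mul]
    simp only [Matrix.mul_assoc, hW]
  have htr : ∀ U : Matrix.unitaryGroup (Fin N) ℂ,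
      (Matrix.trace ((U : Matrix (Fin N) (Fin N) ℂ) * hermLog hA *
        star (U : Matrix (Fin N) (Fin N) ℂ) * D)).re ≤ 0 := by
    intro U
    rw [hrw U]
    exact trace_re_nonpos _ _ _ (fun j => Real.log_nonpos (hAeig0 j) (hAeig j)) hd
  have hfle : ∀ U, f U ≤ 1 := by
    intro U
    rw [hf]
    simp only
    rw [show (1:ℝ) = Real.exp 0 by simp]
    apply Real.exp_le_exp.mpr
    exact mul_nonpos_of_nonneg_of_nonpos (Nat.cast_nonneg N) (htr U)
  have hfnn : ∀ U, 0 ≤ f U := fun U => (Real.exp_pos _).le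
  have hcont : Continuous f := by
    apply Real.continuous_exp.comp
    apply Continuous.mul continuous_const
    apply Complex.continuous_re.comp
    apply Continuous.matrix_trace
    apply Continuous.matrix_mul
    apply Continuous.matrix_mul
    apply Continuous.matrix_mul continuous_subtype_val continuous_const
    · exact continuous_star.comp continuous_subtype_val
    · exact continuous_const
  have hint : Integrable f m := by
    apply Integrable.mono' (integrable_const (1:ℝ))
      hcont.measurable.aestronglyMeasurable
    filter_upwards with U
    rw [Real.norm_eq_abs, abs_of_nonneg (hfnn U)]
    exact hfle U
  constructor
  · rw [sphInt]
    refine (integral_pos_iff_support_of_nonneg hfnn hint).mpr ?_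
    have : Function.support f = Set.univ := Set.eq_univ_of_forall fun U => (Real.exp_pos _).ne'
    rw [this]
    simp
  · rw [sphInt]
    have h1 : ∫ U, f U ∂m ≤ ∫ _, (1:ℝ) ∂m :=
      integral_mono_of_nonneg (Filter.Eventually.of_forall hfnn) (integrable_const 1)
        (Filter.Eventually.of_forall hfle)
    simpa using h1

lemma c_lower {c : ℝ → ℝ} (hc : ContinuousOn c (Set.Ici 0)) {ρ : ℝ} (hρ : 0 < ρ) (x₀ : ℝ)
    (hg : ∀ x ≥ x₀, ρ * x ≤ c x) : ∃ M : ℝ, 0 ≤ M ∧ ∀ x ≥ (0:ℝ), ρ * x - M ≤ c x := by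
  set t := max x₀ 0 with ht
  have hsub : Set.Icc (0:ℝ) t ⊆ Set.Ici 0 := fun x hx => hx.1
  have hcomp : IsCompact (c '' Set.Icc 0 t) :=
    (isCompact_Icc).image_of_continuousOn (hc.mono hsub)
  obtain ⟨m₀, hm₀⟩ := hcomp.bddBelow
  refine ⟨max 0 (ρ * t - m₀), le_max_left _ _, ?_⟩
  intro x hx
  rcases le_total x t with h | h
  · have hcx : m₀ ≤ c x := hm₀ (Set.mem_image_of_mem c ⟨hx, h⟩)
    have : ρ * x ≤ ρ * t := by nlinarith
    have := le_max_right 0 (ρ * t - m₀)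
    linarith
  · have : ρ * x ≤ c x := hg x (le_trans (le_max_left _ _) h)
    have := le_max_left 0 (ρ * t - m₀)
    linarith

lemma le_exp_lin {δ x : ℝ} (hδ : 0 < δ) (hx : 0 ≤ x) :
    x ≤ Real.exp (δ * x + Real.log δ⁻¹) := by
  rw [Real.exp_add, Real.exp_log (inv_pos.mpr hδ)]
  have h1 : δ * x + 1 ≤ Real.exp (δ * x) := Real.add_one_le_exp _
  have h2 : (δ * x + 1) * δ⁻¹ ≤ Real.exp (δ * x) * δ⁻¹ :=
    mul_le_mul_of_nonneg_right h1 (inv_pos.mpr hδ).le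
  have h3 : (δ * x + 1) * δ⁻¹ = x + δ⁻¹ := by field_simp
  have h4 : (0:ℝ) < δ⁻¹ := inv_pos.mpr hδ
  linarith

lemma vandermonde_pos (N : ℕ) (hN : 0 < N) {lam : Fin N → ℕ} (hlam : Antitone lam) :
    0 < ∏ i : Fin N, ∏ j ∈ Finset.Ioi i, ((lCoord N lam i - lCoord N lam j) / N) := by
  apply Finset.prod_pos
  intro i _
  apply Finset.prod_pos
  intro j hj
  have := lCoord_sub_ge N hlam (Finset.mem_Ioi.mp hj)
  have hN' : (0:ℝ) < N := Nat.cast_pos.mpr hN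
  positivity

lemma vandermonde_bound (N : ℕ) (hN : 0 < N) {lam : Fin N → ℕ} (hlam : Antitone lam)
    {δ : ℝ} (hδ0 : 0 < δ) (hδ1 : δ ≤ 1) :
    (∏ i : Fin N, ∏ j ∈ Finset.Ioi i, ((lCoord N lam i - lCoord N lam j) / N)) ≤
      Real.exp (δ * (∑ i : Fin N, lCoord N lam i) + Real.log δ⁻¹ * N ^ 2) := by
  have hN' : (0:ℝ) < N := Nat.cast_pos.mpr hN
  have hlog : 0 ≤ Real.log δ⁻¹ := Real.log_nonneg (one_le_inv_iff₀.mpr ⟨hδ0, hδ1⟩)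
  have inner : ∀ i : Fin N, (∏ j ∈ Finset.Ioi i, ((lCoord N lam i - lCoord N lam j) / N)) ≤
      Real.exp ((δ * (lCoord N lam i / N) + Real.log δ⁻¹) * N) := by
    intro i
    have step1 : (∏ j ∈ Finset.Ioi i, ((lCoord N lam i - lCoord N lam j) / N)) ≤
        ∏ _j ∈ Finset.Ioi i, Real.exp (δ * (lCoord N lam i / N) + Real.log δ⁻¹) := by
      apply Finset.prod_le_prod
      · intro j hj
        have := lCoord_sub_ge N hlam (Finset.mem_Ioi.mp hj)
        positivity
      · intro j hj
        have h1 : (lCoord N lam i - lCoord N lam j) / N ≤ lCoord N lam i / N := by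
          apply div_le_div_of_nonneg_right ?_ hN'.le
          · linarith [lCoord_nonneg N lam j]
        exact h1.trans (le_exp_lin hδ0 (div_nonneg (lCoord_nonneg N lam i) hN'.le))
    rw [Finset.prod_const] at step1
    refine step1.trans ?_
    rw [← Real.exp_nat_mul]
    apply Real.exp_le_exp.mpr
    have hcard : ((Finset.Ioi i).card : ℝ) ≤ N := by
      have h := Finset.card_le_univ (Finset.Ioi i)
      calc ((Finset.Ioi i).card : ℝ) ≤ ((Finset.univ : Finset (Fin N)).card : ℝ) :=
            Nat.cast_le.mpr h
        _ = N := by simp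
    have hpos : 0 ≤ δ * (lCoord N lam i / N) + Real.log δ⁻¹ := by
      have h := div_nonneg (lCoord_nonneg N lam i) hN'.le
      nlinarith
    calc ((Finset.Ioi i).card : ℝ) * (δ * (lCoord N lam i / N) + Real.log δ⁻¹)
        ≤ (N:ℝ) * (δ * (lCoord N lam i / N) + Real.log δ⁻¹) :=
          mul_le_mul_of_nonneg_right hcard hpos
      _ = (δ * (lCoord N lam i / N) + Real.log δ⁻¹) * N := by ring
  have step2 : (∏ i : Fin N, ∏ j ∈ Finset.Ioi i, ((lCoord N lam i - lCoord N lam j) / N)) ≤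
      ∏ i : Fin N, Real.exp ((δ * (lCoord N lam i / N) + Real.log δ⁻¹) * N) := by
    apply Finset.prod_le_prod
    · intro i _
      apply Finset.prod_nonneg
      intro j hj
      have := lCoord_sub_ge N hlam (Finset.mem_Ioi.mp hj)
      positivity
    · intro i _; exact inner i
  refine step2.trans ?_
  rw [← Real.exp_sum]
  apply Real.exp_le_exp.mpr
  have : ∑ i : Fin N, (δ * (lCoord N lam i / N) + Real.log δ⁻¹) * N
      = δ * (∑ i : Fin N, lCoord N lam i) + Real.log δ⁻¹ * N ^ 2 := by
    have expand : ∀ i : Fin N, (δ * (lCoord N lam i / N) + Real.log δ⁻¹) * N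
        = δ * lCoord N lam i + Real.log δ⁻¹ * N := by
      intro i; field_simp
    rw [Finset.sum_congr rfl (fun i _ => expand i), Finset.sum_add_distrib]
    simp only [Finset.sum_const, Finset.card_univ, Fintype.card_fin, nsmul_eq_mul,
      ← Finset.mul_sum]
    ring
  rw [this]

set_option maxHeartbeats 1000000

/-- **Exponential tightness.** `Π̃^N(X)` is finite for every `N` (the defining family is
summable), and `lim_{L → ∞} limsup_{N → ∞} (1/N²) log Π̃^N(K_L^c) = -∞`, where
`K_L` is the set of probability measures on `[0, ∞)` with first moment at most `L`. -/
theorem exponential_tightness (ε : ℝ) (hε : 0 < ε) (hε1 : ε ≤ 1)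
    (m : ∀ N : ℕ, Measure (Matrix.unitaryGroup (Fin N) ℂ))
    (hmHaar : ∀ N, (m N).IsHaarMeasure) (hmProb : ∀ N, IsProbabilityMeasure (m N))
    (A B : ∀ N : ℕ, Matrix (Fin N) (Fin N) ℂ)
    (hA : ∀ N, (A N).IsHermitian) (hB : ∀ N, (B N).IsHermitian)
    (hAeig : ∀ N i, (hA N).eigenvalues i ∈ Set.Icc ε 1)
    (hBeig : ∀ N i, (hB N).eigenvalues i ∈ Set.Icc ε 1)
    (F : Measure ℝ → ℝ)
    (hFbd : ∃ K : ℝ, ∀ μ : Measure ℝ, IsProbabilityMeasure μ → μ (Set.Iio 0) = 0 → |F μ| ≤ K)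
    (hFcont : ∀ (μs : ℕ → Measure ℝ) (μ : Measure ℝ),
      (∀ n, IsProbabilityMeasure (μs n)) → IsProbabilityMeasure μ →
      (∀ n, μs n (Set.Iio 0) = 0) → μ (Set.Iio 0) = 0 →
      (∀ g : BoundedContinuousFunction ℝ ℝ,
        Filter.Tendsto (fun n => ∫ x, g x ∂(μs n)) Filter.atTop (nhds (∫ x, g x ∂μ))) →
      Filter.Tendsto (fun n => F (μs n)) Filter.atTop (nhds (F μ)))
    (c : ℝ → ℝ) (hc : ContinuousOn c (Set.Ici 0))
    (hgrow : ∃ ρ' > (0 : ℝ), ∃ x₀ : ℝ, ∀ x ≥ x₀, ρ' * x ≤ c x)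
    (a b : ℝ) (ha : 0 ≤ a) (hb : 0 ≤ b) :
    (∀ N : ℕ, 0 < N → ∀ X : Set (Measure ℝ),
      Summable (piTerm N (m N) (hermLog (hA N)) (hermLog (hB N)) F c a b X)) ∧
    (∀ C : ℝ, ∃ L₀ : ℝ, ∀ L ≥ L₀, ∃ N₀ : ℕ, ∀ N ≥ N₀,
      (1 / (N : ℝ) ^ 2) *
          Real.log (piTilde N (m N) (hermLog (hA N)) (hermLog (hB N)) F c a b
            {μ : Measure ℝ | L < ∫ x, x ∂μ}) ≤ C) := by
  
  classical
  obtain ⟨K, hK⟩ := hFbd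
  obtain ⟨ρ', hρ', x₀, hx₀⟩ := hgrow
  obtain ⟨M, hM0, hMc⟩ := c_lower hc hρ' x₀ hx₀
  have hab1 : (0:ℝ) < a + b + 1 := by linarith
  set δ : ℝ := min 1 (ρ' / (2 * (a + b + 1))) with hδdef
  have hδ0 : 0 < δ := lt_min one_pos (by positivity)
  have hδ1 : δ ≤ 1 := min_le_left _ _
  have hδab : (a + b) * δ ≤ ρ' / 2 := by
    have h1 : δ ≤ ρ' / (2 * (a + b + 1)) := min_le_right _ _
    have h2 : (a + b) * δ ≤ (a + b) * (ρ' / (2 * (a + b + 1))) :=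
      mul_le_mul_of_nonneg_left h1 (by linarith)
    have h3 : (a + b) * (ρ' / (2 * (a + b + 1))) ≤ ρ' / 2 := by
      rw [← mul_div_assoc, div_le_div_iff₀ (by positivity) (by norm_num)]
      nlinarith
    linarith
  have hlogδ : 0 ≤ Real.log δ⁻¹ := Real.log_nonneg (one_le_inv_iff₀.mpr ⟨hδ0, hδ1⟩)
  set β : ℝ := (a + b) * Real.log δ⁻¹ + K + M with hβdef
  -- the fundamental per-term bound
  have key : ∀ (N : ℕ), 0 < N → ∀ (X : Set (Measure ℝ)) (lam : {l : Fin N → ℕ // Antitone l}),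
      piTerm N (m N) (hermLog (hA N)) (hermLog (hB N)) F c a b X lam ≤
        X.indicator (fun _ => (1:ℝ)) (empYoung N lam.1) *
          (Real.exp (β * (N:ℝ) ^ 2) *
            Real.exp (-(ρ' / 2) * ∑ i : Fin N, lCoord N lam.1 i)) := by
    intro N hN X lam
    haveI := hmProb N
    have hN' : (0:ℝ) < N := Nat.cast_pos.mpr hN
    have hS0 : 0 ≤ ∑ i : Fin N, lCoord N lam.1 i :=
      Finset.sum_nonneg fun i _ => lCoord_nonneg N lam.1 i
    have hd0 : ∀ k : Fin N, 0 ≤ lCoord N lam.1 k / N :=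
      fun k => div_nonneg (lCoord_nonneg N lam.1 k) hN'.le
    have hsA := sphInt_bounds (m N) (hA N) (fun i => (hAeig N i).2)
      (fun i => (hε.trans_le (hAeig N i).1).le) _ hd0
    have hsB := sphInt_bounds (m N) (hB N) (fun i => (hBeig N i).2)
      (fun i => (hε.trans_le (hBeig N i).1).le) _ hd0
    have hPpos := vandermonde_pos N hN lam.2
    have hPle : (∏ i : Fin N, ∏ j ∈ Finset.Ioi i,
          ((lCoord N lam.1 i - lCoord N lam.1 j) / N)) ^ (a + b)
        ≤ Real.exp ((δ * (∑ i : Fin N, lCoord N lam.1 i) +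
            Real.log δ⁻¹ * (N:ℝ) ^ 2) * (a + b)) := by
      rw [Real.exp_mul]
      exact Real.rpow_le_rpow hPpos.le (vandermonde_bound N hN lam.2 hδ0 hδ1) (by linarith)
    have hsA1 : sphInt N (m N) (hermLog (hA N))
        (Matrix.diagonal fun i => ((lCoord N lam.1 i / N : ℝ) : ℂ)) ^ a ≤ 1 :=
      Real.rpow_le_one hsA.1.le hsA.2 ha
    have hsB1 : sphInt N (m N) (hermLog (hB N))
        (Matrix.diagonal fun i => ((lCoord N lam.1 i / N : ℝ) : ℂ)) ^ b ≤ 1 :=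
      Real.rpow_le_one hsB.1.le hsB.2 hb
    have hFle : F (empYoung N lam.1) ≤ K :=
      (abs_le.mp (hK (empYoung N lam.1) (empYoung_prob N hN lam.1) (empYoung_Iio N lam.1))).2
    have hcint : ρ' * ((∑ i : Fin N, lCoord N lam.1 i) / (N:ℝ) ^ 2) - M
        ≤ ∫ x, c x ∂(empYoung N lam.1) := by
      rw [empYoung_integral]
      have hsum : ∑ i : Fin N, (ρ' * (lCoord N lam.1 i / N) - M)
          ≤ ∑ i : Fin N, c (lCoord N lam.1 i / N) :=
        Finset.sum_le_sum fun i _ => hMc _ (hd0 i)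
      have hlhs : ∑ i : Fin N, (ρ' * (lCoord N lam.1 i / N) - M)
          = ρ' * ((∑ i : Fin N, lCoord N lam.1 i) / N) - N * M := by
        rw [Finset.sum_sub_distrib]
        simp only [Finset.sum_const, Finset.card_univ, Fintype.card_fin, nsmul_eq_mul]
        rw [← Finset.mul_sum, ← Finset.sum_div]
      rw [hlhs] at hsum
      have h5 := mul_le_mul_of_nonneg_left hsum (inv_nonneg.mpr hN'.le)
      calc ρ' * ((∑ i : Fin N, lCoord N lam.1 i) / (N:ℝ)^2) - M
          = (N:ℝ)⁻¹ * (ρ' * ((∑ i : Fin N, lCoord N lam.1 i) / N) - N * M) := by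
            field_simp
        _ ≤ (N:ℝ)⁻¹ * ∑ i : Fin N, c (lCoord N lam.1 i / N) := h5
    have hexpT : Real.exp ((N:ℝ) ^ 2 * F (empYoung N lam.1) -
          (N:ℝ) ^ 2 * ∫ x, c x ∂(empYoung N lam.1))
        ≤ Real.exp ((N:ℝ) ^ 2 * K + (N:ℝ) ^ 2 * M - ρ' * ∑ i : Fin N, lCoord N lam.1 i) := by
      apply Real.exp_le_exp.mpr
      have h6 : (N:ℝ)^2 * (ρ' * ((∑ i : Fin N, lCoord N lam.1 i) / (N:ℝ)^2) - M)
          ≤ (N:ℝ)^2 * ∫ x, c x ∂(empYoung N lam.1) :=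
        mul_le_mul_of_nonneg_left hcint (by positivity)
      have h7 : (N:ℝ)^2 * (ρ' * ((∑ i : Fin N, lCoord N lam.1 i) / (N:ℝ)^2) - M)
          = ρ' * (∑ i : Fin N, lCoord N lam.1 i) - (N:ℝ)^2 * M := by
        field_simp
      have h8 : (N:ℝ)^2 * F (empYoung N lam.1) ≤ (N:ℝ)^2 * K :=
        mul_le_mul_of_nonneg_left hFle (by positivity)
      linarith
    unfold piTerm
    have hind0 : 0 ≤ X.indicator (fun _ => (1:ℝ)) (empYoung N lam.1) :=
      Set.indicator_nonneg (fun _ _ => zero_le_one) _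
    have hsAnn : 0 ≤ sphInt N (m N) (hermLog (hA N))
        (Matrix.diagonal fun i => ((lCoord N lam.1 i / N : ℝ) : ℂ)) ^ a :=
      (Real.rpow_pos_of_pos hsA.1 a).le
    have hsBnn : 0 ≤ sphInt N (m N) (hermLog (hB N))
        (Matrix.diagonal fun i => ((lCoord N lam.1 i / N : ℝ) : ℂ)) ^ b :=
      (Real.rpow_pos_of_pos hsB.1 b).le
    have e1nn : (0:ℝ) ≤ Real.exp ((δ * (∑ i : Fin N, lCoord N lam.1 i) +
        Real.log δ⁻¹ * (N:ℝ)^2) * (a+b)) := (Real.exp_pos _).le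
    have hrest : (∏ i : Fin N, ∏ j ∈ Finset.Ioi i,
          ((lCoord N lam.1 i - lCoord N lam.1 j) / N)) ^ (a+b) *
          sphInt N (m N) (hermLog (hA N))
            (Matrix.diagonal fun i => ((lCoord N lam.1 i / N : ℝ) : ℂ)) ^ a *
          sphInt N (m N) (hermLog (hB N))
            (Matrix.diagonal fun i => ((lCoord N lam.1 i / N : ℝ) : ℂ)) ^ b *
          Real.exp ((N:ℝ)^2 * F (empYoung N lam.1) -
            (N:ℝ)^2 * ∫ x, c x ∂(empYoung N lam.1))
        ≤ Real.exp (β * (N:ℝ)^2) * Real.exp (-(ρ'/2) * ∑ i : Fin N, lCoord N lam.1 i) := by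
      have inner1 := mul_le_mul hPle hsA1 hsAnn e1nn
      have inner2 := mul_le_mul inner1 hsB1 hsBnn (by positivity)
      have step := mul_le_mul inner2 hexpT (Real.exp_pos _).le (by positivity)
      refine step.trans ?_
      rw [mul_one, mul_one, ← Real.exp_add, ← Real.exp_add]
      apply Real.exp_le_exp.mpr
      have h9 : (a+b) * δ * (∑ i : Fin N, lCoord N lam.1 i)
          ≤ (ρ'/2) * (∑ i : Fin N, lCoord N lam.1 i) :=
        mul_le_mul_of_nonneg_right hδab hS0
      rw [hβdef]
      nlinarith [h9]
    refine le_trans (le_of_eq (by ring)) (mul_le_mul_of_nonneg_left hrest hind0)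
  clear_value δ β
  -- nonnegativity of each term
  have keynn : ∀ (N : ℕ), 0 < N → ∀ (X : Set (Measure ℝ))
      (lam : {l : Fin N → ℕ // Antitone l}),
      0 ≤ piTerm N (m N) (hermLog (hA N)) (hermLog (hB N)) F c a b X lam := by
    intro N hN X lam
    unfold piTerm
    have hind0 : 0 ≤ X.indicator (fun _ => (1:ℝ)) (empYoung N lam.1) :=
      Set.indicator_nonneg (fun _ _ => zero_le_one) _
    have hPnn : (0:ℝ) ≤ (∏ i : Fin N, ∏ j ∈ Finset.Ioi i,
        ((lCoord N lam.1 i - lCoord N lam.1 j) / N)) ^ (a+b) :=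
      Real.rpow_nonneg (vandermonde_pos N hN lam.2).le _
    have hsAnn : 0 ≤ sphInt N (m N) (hermLog (hA N))
        (Matrix.diagonal fun i => ((lCoord N lam.1 i / N : ℝ) : ℂ)) :=
      integral_nonneg fun U => (Real.exp_pos _).le
    have hsBnn : 0 ≤ sphInt N (m N) (hermLog (hB N))
        (Matrix.diagonal fun i => ((lCoord N lam.1 i / N : ℝ) : ℂ)) :=
      integral_nonneg fun U => (Real.exp_pos _).le
    exact mul_nonneg (mul_nonneg (mul_nonneg (mul_nonneg hind0 hPnn)
      (Real.rpow_nonneg hsAnn a)) (Real.rpow_nonneg hsBnn b)) (Real.exp_pos _).le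
  -- rewriting products of geometric terms as exponentials
  have prodexp : ∀ (N : ℕ) (lam : Fin N → ℕ) (t : ℝ),
      (∏ i : Fin N, Real.exp (-t) ^ (lam i)) = Real.exp (-t * ∑ i : Fin N, (lam i : ℝ)) := by
    intro N lam t
    calc (∏ i : Fin N, Real.exp (-t) ^ (lam i))
        = ∏ i : Fin N, Real.exp ((lam i : ℝ) * (-t)) := by
          refine Finset.prod_congr rfl fun i _ => ?_
          rw [Real.exp_nat_mul]
      _ = Real.exp (∑ i : Fin N, (lam i : ℝ) * (-t)) := (Real.exp_sum _ _).symm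
      _ = Real.exp (-t * ∑ i : Fin N, (lam i : ℝ)) := by
          rw [← Finset.sum_mul]
          ring_nf
  -- Part 1: summability
  have part1 : ∀ N : ℕ, 0 < N → ∀ X : Set (Measure ℝ),
      Summable (piTerm N (m N) (hermLog (hA N)) (hermLog (hB N)) F c a b X) := by
    intro N hN X
    set r : ℝ := Real.exp (-(ρ'/2)) with hrdef
    have hr0 : 0 ≤ r := (Real.exp_pos _).le
    have hr1 : r < 1 := Real.exp_lt_one_iff.mpr (by linarith)
    have hgsum : Summable (fun lam : {l : Fin N → ℕ // Antitone l} =>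
        Real.exp (β * (N:ℝ)^2) * ∏ i : Fin N, r ^ (lam.1 i)) :=
      ((summable_pi_geom N hr0 hr1).1.subtype {l : Fin N → ℕ | Antitone l}).mul_left _
    apply Summable.of_nonneg_of_le (fun lam => keynn N hN X lam) ?_ hgsum
    intro lam
    have h2 := key N hN X lam
    have hsig : ∑ i : Fin N, ((lam.1 i : ℝ)) ≤ ∑ i : Fin N, lCoord N lam.1 i :=
      Finset.sum_le_sum fun i _ => lam_le_lCoord N lam.1 i
    have h3 : Real.exp (-(ρ'/2) * ∑ i : Fin N, lCoord N lam.1 i)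
        ≤ ∏ i : Fin N, r ^ (lam.1 i) := by
      rw [hrdef, prodexp N lam.1 (ρ'/2)]
      apply Real.exp_le_exp.mpr
      exact mul_le_mul_of_nonpos_left hsig (by linarith)
    refine h2.trans ?_
    have hind1 : X.indicator (fun _ => (1:ℝ)) (empYoung N lam.1) ≤ 1 :=
      Set.indicator_apply_le' (fun _ => le_refl 1) (fun _ => zero_le_one)
    have hind0 : 0 ≤ X.indicator (fun _ => (1:ℝ)) (empYoung N lam.1) :=
      Set.indicator_nonneg (fun _ _ => zero_le_one) _
    calc X.indicator (fun _ => (1:ℝ)) (empYoung N lam.1) *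
          (Real.exp (β * (N:ℝ)^2) * Real.exp (-(ρ'/2) * ∑ i : Fin N, lCoord N lam.1 i))
        ≤ 1 * (Real.exp (β * (N:ℝ)^2) * ∏ i : Fin N, r ^ (lam.1 i)) := by
          apply mul_le_mul hind1 (mul_le_mul_of_nonneg_left h3 (Real.exp_pos _).le)
            (by positivity) zero_le_one
      _ = Real.exp (β * (N:ℝ)^2) * ∏ i : Fin N, r ^ (lam.1 i) := one_mul _
  refine ⟨part1, ?_⟩
  -- Part 2
  intro C
  set r : ℝ := Real.exp (-(ρ'/4)) with hrdef
  have hr0 : 0 ≤ r := (Real.exp_pos _).le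
  have hr1 : r < 1 := Real.exp_lt_one_iff.mpr (by linarith)
  have hr1' : 0 < 1 - r := by linarith
  set D : ℝ := Real.log (1 - r)⁻¹ with hDdef
  have hD0 : 0 ≤ D := Real.log_nonneg (one_le_inv_iff₀.mpr ⟨hr1', by linarith⟩)
  clear_value r D
  refine ⟨(β + D - C) * 4 / ρ', fun L hL => ⟨1, fun N hN1 => ?_⟩⟩
  have hN : 0 < N := hN1
  have hN' : (0:ℝ) < N := Nat.cast_pos.mpr hN
  set X : Set (Measure ℝ) := {μ : Measure ℝ | L < ∫ x, x ∂μ} with hXdef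
  have hmean : ∀ lam : Fin N → ℕ, ∫ x, x ∂(empYoung N lam)
      = (∑ i : Fin N, lCoord N lam i) / (N:ℝ)^2 := by
    intro lam
    rw [empYoung_integral, ← Finset.sum_div, inv_mul_eq_div, div_div, ← sq]
  have hb2 : ∀ lam : {l : Fin N → ℕ // Antitone l},
      piTerm N (m N) (hermLog (hA N)) (hermLog (hB N)) F c a b X lam ≤
        Real.exp ((β - ρ' * L / 4) * (N:ℝ)^2) * ∏ i : Fin N, r ^ (lam.1 i) := by
    intro lam
    by_cases hmem : empYoung N lam.1 ∈ X
    · have h2 := key N hN X lam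
      have hsig : ∑ i : Fin N, ((lam.1 i : ℝ)) ≤ ∑ i : Fin N, lCoord N lam.1 i :=
        Finset.sum_le_sum fun i _ => lam_le_lCoord N lam.1 i
      have hmem' : L < ∫ x, x ∂(empYoung N lam.1) := hmem
      rw [hmean lam.1] at hmem'
      have hLS : L * (N:ℝ)^2 ≤ ∑ i : Fin N, lCoord N lam.1 i :=
        ((lt_div_iff₀ (by positivity)).mp hmem').le
      refine h2.trans ?_
      rw [Set.indicator_of_mem hmem, one_mul, hrdef, prodexp N lam.1 (ρ'/4),
        ← Real.exp_add, ← Real.exp_add]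
      apply Real.exp_le_exp.mpr
      have h10 : (ρ'/4) * (L * (N:ℝ)^2) ≤ (ρ'/4) * ∑ i : Fin N, lCoord N lam.1 i :=
        mul_le_mul_of_nonneg_left hLS (by linarith)
      have h11 : (ρ'/4) * (∑ i : Fin N, ((lam.1 i : ℝ)))
          ≤ (ρ'/4) * ∑ i : Fin N, lCoord N lam.1 i :=
        mul_le_mul_of_nonneg_left hsig (by linarith)
      have hexp2 : (β - ρ' * L / 4) * (N:ℝ)^2 = β * (N:ℝ)^2 - (ρ'/4) * (L * (N:ℝ)^2) := by
        ring
      rw [hexp2]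
      linarith only [h10, h11]
    · have hzero : piTerm N (m N) (hermLog (hA N)) (hermLog (hB N)) F c a b X lam = 0 := by
        unfold piTerm
        rw [Set.indicator_of_notMem hmem]
        ring
      rw [hzero]
      exact mul_nonneg (Real.exp_pos _).le
        (Finset.prod_nonneg fun i _ => pow_nonneg hr0 _)
  have hsum1 := part1 N hN X
  have hgsumN := (summable_pi_geom N hr0 hr1).1
  have hgsum : Summable (fun lam : {l : Fin N → ℕ // Antitone l} =>
      Real.exp ((β - ρ' * L / 4) * (N:ℝ)^2) * ∏ i : Fin N, r ^ (lam.1 i)) :=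
    (hgsumN.subtype {l : Fin N → ℕ | Antitone l}).mul_left _
  have htsum : piTilde N (m N) (hermLog (hA N)) (hermLog (hB N)) F c a b X ≤
      Real.exp ((β - ρ' * L / 4) * (N:ℝ)^2) * ((1 - r)⁻¹ ^ N) := by
    unfold piTilde
    have t1 := Summable.tsum_le_tsum hb2 hsum1 hgsum
    have t2 : (∑' lam : {l : Fin N → ℕ // Antitone l},
        Real.exp ((β - ρ' * L / 4) * (N:ℝ)^2) * ∏ i : Fin N, r ^ (lam.1 i))
        = Real.exp ((β - ρ' * L / 4) * (N:ℝ)^2) *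
          ∑' lam : {l : Fin N → ℕ // Antitone l}, ∏ i : Fin N, r ^ (lam.1 i) :=
      tsum_mul_left
    have t3 : (∑' lam : {l : Fin N → ℕ // Antitone l}, ∏ i : Fin N, r ^ (lam.1 i))
        ≤ ∑' f : Fin N → ℕ, ∏ i : Fin N, r ^ (f i) :=
      Summable.tsum_subtype_le (fun f : Fin N → ℕ => ∏ i : Fin N, r ^ (f i)) {l | Antitone l}
        (fun f => Finset.prod_nonneg fun i _ => pow_nonneg hr0 _) hgsumN
    refine t1.trans ?_
    rw [t2]
    exact mul_le_mul_of_nonneg_left (t3.trans (summable_pi_geom N hr0 hr1).2)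
      (Real.exp_pos _).le
  set Mstar : ℕ := Nat.ceil ((max L 0 + 1) * N) with hMs
  set lamstar : {l : Fin N → ℕ // Antitone l} :=
    ⟨fun _ => Mstar, fun _ _ _ => le_refl _⟩ with hlamstar
  have hmemstar : empYoung N lamstar.1 ∈ X := by
    show L < ∫ x, x ∂(empYoung N lamstar.1)
    rw [hmean lamstar.1]
    have h20 : ((max L 0 + 1) * N : ℝ) ≤ Mstar := Nat.le_ceil _
    have h21 : (N:ℝ) * (Mstar:ℝ) ≤ ∑ i : Fin N, lCoord N lamstar.1 i := by
      calc (N:ℝ) * (Mstar:ℝ) = ∑ _i : Fin N, (Mstar:ℝ) := by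
            simp [Finset.sum_const, Finset.card_univ]
        _ ≤ ∑ i : Fin N, lCoord N lamstar.1 i :=
            Finset.sum_le_sum fun i _ => lam_le_lCoord N lamstar.1 i
    rw [lt_div_iff₀ (by positivity)]
    have h22 : (N:ℝ) * ((max L 0 + 1) * N) ≤ (N:ℝ) * Mstar :=
      mul_le_mul_of_nonneg_left h20 hN'.le
    have h23 : L + 1 ≤ max L 0 + 1 := by linarith only [le_max_left L 0]
    have hN2 : (0:ℝ) < (N:ℝ)^2 := by positivity
    have h24 : (L + 1) * (N:ℝ)^2 ≤ (max L 0 + 1) * (N:ℝ)^2 :=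
      mul_le_mul_of_nonneg_right h23 (by positivity)
    linarith only [h21, h22, h24, hN2]
  have hpos : 0 < piTilde N (m N) (hermLog (hA N)) (hermLog (hB N)) F c a b X := by
    have hterm : 0 < piTerm N (m N) (hermLog (hA N)) (hermLog (hB N)) F c a b X lamstar := by
      unfold piTerm
      haveI := hmProb N
      have hd0 : ∀ k : Fin N, 0 ≤ lCoord N lamstar.1 k / N :=
        fun k => div_nonneg (lCoord_nonneg N lamstar.1 k) hN'.le
      have hsA := sphInt_bounds (m N) (hA N) (fun i => (hAeig N i).2)
        (fun i => (hε.trans_le (hAeig N i).1).le) _ hd0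
      have hsB := sphInt_bounds (m N) (hB N) (fun i => (hBeig N i).2)
        (fun i => (hε.trans_le (hBeig N i).1).le) _ hd0
      rw [Set.indicator_of_mem hmemstar]
      have hPpos := vandermonde_pos N hN lamstar.2
      exact mul_pos (mul_pos (mul_pos (mul_pos one_pos
        (Real.rpow_pos_of_pos hPpos _)) (Real.rpow_pos_of_pos hsA.1 a))
        (Real.rpow_pos_of_pos hsB.1 b)) (Real.exp_pos _)
    have hle := Summable.le_tsum hsum1 lamstar fun j _ => keynn N hN X j
    calc (0:ℝ) < piTerm N (m N) (hermLog (hA N)) (hermLog (hB N)) F c a b X lamstar := hterm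
      _ ≤ piTilde N (m N) (hermLog (hA N)) (hermLog (hB N)) F c a b X := hle
  have hlog := Real.log_le_log hpos htsum
  rw [Real.log_mul (Real.exp_ne_zero _) (by positivity), Real.log_exp, Real.log_pow,
    ← hDdef] at hlog
  have hmul := mul_le_mul_of_nonneg_left hlog (by positivity : (0:ℝ) ≤ 1/(N:ℝ)^2)
  refine le_trans hmul ?_
  have hNd : (1/(N:ℝ)^2) * ((β - ρ'*L/4)*(N:ℝ)^2 + (N:ℝ) * D) = (β - ρ'*L/4) + D / N := by
    field_simp
  rw [hNd]
  have hDN : D / N ≤ D := by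
    apply div_le_self hD0
    exact_mod_cast hN1
  have hLge : (β + D - C) * 4 / ρ' ≤ L := hL
  rw [div_le_iff₀ hρ'] at hLge
  nlinarith [hLge]
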